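/- Catalan's constant G satisfies π·G = 8·∫₀¹ ∫₀^{θ₃} ∫₀^{θ₂} dθ₁ dθ₂ dθ₃ / ((1−θ₁²)(1+θ₂²)(1+θ₃²)) + (7/4)·ζ(3). -/

import Mathlib

/-!
Integrating out `θ₁` gives `artanh θ₂`, so the triple integral is `∫₀¹ W(t) / (1 + t²) dt` with
`W` the primitive of `artanh x / (1 + x²)`; integrating by parts against `arctan` turns it into
`(π/4) W(1) - ∫₀¹ arctan x · artanh x / (1 + x²) dx`. Under `x = tan θ` one has
`artanh (tan θ) = -½ log tan (π/4 - θ)`, so after reflecting `θ ↦ π/4 - θ` both integrals are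
combinations of the moments `∫₀^{π/4} w(θ) (-½ log tan θ) dθ` with `w = 1` and `w = θ`. These are computed termwise
from the Fourier series `-½ log tan θ = ∑ cos ((4k+2)θ) / (2k+1)`, justified through its Abel means
`Re artanh (r e^{2iθ})` as `r → 1⁻`: they equal `G/2` and `πG/8 - λ(3)/4`, where
`λ(3) = ∑ 1/(2k+1)³ = (7/8) ζ(3)`.
-/

open Real MeasureTheory intervalIntegral Filter Topology Set

lemma artanh_eq_half_log_sub {x : ℝ} (hx : x ∈ Ioo (-1) 1) :
    artanh x = (log (1 + x) - log (1 - x)) / 2 := by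
  rw [artanh_eq_half_log (Ioo_subset_Icc_self hx),
    log_div (by linarith [hx.1]) (by linarith [hx.2])]
  ring

lemma hasDerivAt_artanh {x : ℝ} (hx : x ∈ Ioo (-1) 1) :
    HasDerivAt artanh (1 / (1 - x ^ 2)) x := by
  have h1 : 1 + x ≠ 0 := by linarith [hx.1]
  have h2 : 1 - x ≠ 0 := by linarith [hx.2]
  have h := ((((hasDerivAt_id x).const_add 1).log h1).sub
    (((hasDerivAt_id x).const_sub 1).log h2)).div_const 2
  refine (h.congr_of_eventuallyEq ?_).congr_deriv ?_
  · filter_upwards [isOpen_Ioo.mem_nhds hx] with y hy using artanh_eq_half_log_sub hy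
  · have : 1 - x ^ 2 ≠ 0 := by nlinarith [hx.1, hx.2]
    simp only [id]
    field_simp
    ring

lemma continuousOn_artanh : ContinuousOn artanh (Ioo (-1) 1) :=
  fun _ hx => (hasDerivAt_artanh hx).continuousAt.continuousWithinAt

lemma integral_one_div_one_sub_sq {x : ℝ} (hx : x ∈ Ioo (-1) 1) :
    ∫ t in (0:ℝ)..x, 1 / (1 - t ^ 2) = artanh x := by
  have hsub : uIcc 0 x ⊆ Ioo (-1) 1 :=
    ordConnected_Ioo.uIcc_subset ⟨by norm_num, by norm_num⟩ hx
  have hderiv : ∀ t ∈ uIcc 0 x, HasDerivAt artanh (1 / (1 - t ^ 2)) t :=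
    fun t ht => hasDerivAt_artanh (hsub ht)
  rw [integral_eq_sub_of_hasDerivAt hderiv, artanh_zero, sub_zero]
  refine ContinuousOn.intervalIntegrable fun t ht => ?_
  have : 1 - t ^ 2 ≠ 0 := by nlinarith [(hsub ht).1, (hsub ht).2]
  fun_prop (disch := assumption)

lemma tan_pi_div_four_sub (θ : ℝ) :
    tan (π / 4 - θ) = (cos θ - sin θ) / (cos θ + sin θ) := by
  have h2 : (0:ℝ) < √2 / 2 := by positivity
  rw [tan_eq_sin_div_cos, sin_sub, cos_sub, sin_pi_div_four, cos_pi_div_four, ← mul_sub, ← mul_add,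
    mul_div_mul_left _ _ h2.ne']

lemma artanh_tan {θ : ℝ} (hθ : θ ∈ Ico 0 (π / 4)) :
    artanh (tan θ) = -log (tan (π / 4 - θ)) / 2 := by
  have hc : 0 < cos θ := cos_pos_of_mem_Ioo ⟨by linarith [hθ.1, pi_pos], by linarith [hθ.2, pi_pos]⟩
  have hs : 0 ≤ sin θ := sin_nonneg_of_nonneg_of_le_pi hθ.1 (by linarith [hθ.2, pi_pos])
  have ht : tan θ < 1 := by
    simpa using tan_lt_tan_of_lt_of_lt_pi_div_two (by linarith [hθ.1, pi_pos])
      (by linarith [pi_pos] : π / 4 < π / 2) hθ.2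
  have hsc : sin θ < cos θ := by rwa [tan_eq_sin_div_cos, div_lt_one hc] at ht
  have h0 : 0 ≤ tan θ := tan_nonneg_of_nonneg_of_le_pi_div_two hθ.1 (by linarith [hθ.2, pi_pos])
  have hquot : (1 + tan θ) / (1 - tan θ) = ((cos θ - sin θ) / (cos θ + sin θ))⁻¹ := by
    rw [tan_eq_sin_div_cos, inv_div]
    field_simp
  rw [artanh_eq_half_log ⟨by linarith, ht.le⟩, hquot, log_inv, tan_pi_div_four_sub]
  ring

lemma image_arctan_Ioo : arctan '' Ioo 0 1 = Ioo 0 (π / 4) := by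
  ext θ
  constructor
  · rintro ⟨x, hx, rfl⟩
    exact ⟨arctan_pos.mpr hx.1, arctan_one ▸ arctan_strictMono hx.2⟩
  · intro hθ
    have h2 : θ < π / 2 := by linarith [hθ.2, pi_pos]
    refine ⟨tan θ, ⟨tan_pos_of_pos_of_lt_pi_div_two hθ.1 h2, ?_⟩,
      arctan_tan (by linarith [hθ.1]) h2⟩
    simpa using tan_lt_tan_of_lt_of_lt_pi_div_two (by linarith [hθ.1]) (by linarith [pi_pos]) hθ.2

lemma setIntegral_div_one_add_sq {s : Set ℝ} (hs : MeasurableSet s) (g : ℝ → ℝ) :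
    ∫ x in s, g x / (1 + x ^ 2) = ∫ θ in arctan '' s, g (tan θ) := by
  rw [integral_image_eq_integral_abs_deriv_smul hs
    (fun x _ => (hasDerivAt_arctan x).hasDerivWithinAt) arctan_injective.injOn]
  refine setIntegral_congr_fun hs fun x _ => ?_
  rw [tan_arctan, abs_of_pos (by positivity), smul_eq_mul]
  ring

lemma integrableOn_div_one_add_sq_iff {s : Set ℝ} (hs : MeasurableSet s) (g : ℝ → ℝ) :
    IntegrableOn (fun x => g x / (1 + x ^ 2)) s
      ↔ IntegrableOn (fun θ => g (tan θ)) (arctan '' s) := by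
  rw [integrableOn_image_iff_integrableOn_abs_deriv_smul hs
    (fun x _ => (hasDerivAt_arctan x).hasDerivWithinAt) arctan_injective.injOn]
  refine integrableOn_congr_fun (fun x _ => ?_) hs
  rw [tan_arctan, abs_of_pos (by positivity), smul_eq_mul]
  ring

lemma intervalIntegrable_log_tan (a b : ℝ) :
    IntervalIntegrable (fun θ => log (tan θ)) volume a b := by
  have h : MeromorphicOn tan (uIcc a b) := by
    rw [show tan = sin / cos from funext tan_eq_sin_div_cos]
    exact analyticOnNhd_sin.meromorphicOn.div analyticOnNhd_cos.meromorphicOn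
  exact h.intervalIntegrable_log

lemma eqOn_artanh_tan_mul_comp_arctan_tan (v : ℝ → ℝ) :
    EqOn (fun θ => artanh (tan θ) * v (arctan (tan θ)))
      (fun θ => v θ * (-log (tan (π / 4 - θ)) / 2)) (Ioo 0 (π / 4)) := by
  intro θ hθ
  dsimp only
  rw [artanh_tan (Ioo_subset_Ico_self hθ),
    arctan_tan (by linarith [hθ.1, pi_pos]) (by linarith [hθ.2, pi_pos]), mul_comm]

lemma integral_artanh_div_one_add_sq_mul_comp_arctan (v : ℝ → ℝ) :
    ∫ x in (0:ℝ)..1, artanh x / (1 + x ^ 2) * v (arctan x)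
      = ∫ ψ in (0:ℝ)..π / 4, v (π / 4 - ψ) * (-log (tan ψ) / 2) := by
  have h := setIntegral_div_one_add_sq (measurableSet_Ioo (a := 0) (b := 1))
    (fun x => artanh x * v (arctan x))
  rw [image_arctan_Ioo, setIntegral_congr_fun measurableSet_Ioo
    (eqOn_artanh_tan_mul_comp_arctan_tan v)] at h
  have hreflect := integral_comp_sub_left (a := 0) (b := π / 4)
    (fun ψ => v (π / 4 - ψ) * (-log (tan ψ) / 2)) (π / 4)
  simp only [sub_sub_cancel, sub_self, sub_zero] at hreflect
  calc ∫ x in (0:ℝ)..1, artanh x / (1 + x ^ 2) * v (arctan x)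
      = ∫ x in Ioo 0 1, artanh x * v (arctan x) / (1 + x ^ 2) := by
        rw [integral_of_le zero_le_one, integral_Ioc_eq_integral_Ioo]
        congr 1 with x
        ring
    _ = ∫ θ in (0:ℝ)..π / 4, v θ * (-log (tan (π / 4 - θ)) / 2) := by
        rw [h, integral_of_le (by positivity), integral_Ioc_eq_integral_Ioo]
    _ = _ := hreflect

lemma intervalIntegrable_artanh_div_one_add_sq :
    IntervalIntegrable (fun x => artanh x / (1 + x ^ 2)) volume 0 1 := by
  rw [intervalIntegrable_iff_integrableOn_Ioc_of_le zero_le_one,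
    integrableOn_Ioc_iff_integrableOn_Ioo, integrableOn_div_one_add_sq_iff measurableSet_Ioo,
    image_arctan_Ioo]
  have h := ((intervalIntegrable_log_tan 0 (π / 4)).comp_sub_left (π / 4)).symm.neg.div_const 2
  rw [sub_self, sub_zero, intervalIntegrable_iff_integrableOn_Ioc_of_le (by positivity),
    integrableOn_Ioc_iff_integrableOn_Ioo] at h
  exact h.congr_fun (fun θ hθ => (artanh_tan (Ioo_subset_Ico_self hθ)).symm) measurableSet_Ioo

lemma Complex.hasSum_log_sub_log_of_norm_lt_one {z : ℂ} (hz : ‖z‖ < 1) :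
    HasSum (fun k : ℕ => 2 * (1 / (2 * k + 1)) * z ^ (2 * k + 1))
      (Complex.log (1 + z) - Complex.log (1 - z)) := by
  have h := (Complex.hasSum_taylorSeries_neg_log hz).sub
    (Complex.hasSum_taylorSeries_neg_log (z := -z) (by rwa [norm_neg]))
  rw [sub_neg_eq_add, neg_add_eq_sub, sub_neg_eq_add] at h
  have hodd : ∀ n ∉ range (fun k : ℕ => 2 * k + 1), z ^ n / n - (-z) ^ n / n = 0 := by
    intro n hn
    have he : Even n := by
      rcases Nat.even_or_odd n with h | ⟨k, rfl⟩
      · exact h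
      · exact absurd ⟨k, rfl⟩ hn
    rw [he.neg_pow, sub_self]
  convert (Function.Injective.hasSum_iff (fun a b h => by simpa using h) hodd).mpr h using 1
  ext k
  simp only [Function.comp_apply, (odd_two_mul_add_one k).neg_pow]
  push_cast
  ring

lemma norm_one_add_mul_exp_sq (r θ : ℝ) :
    ‖1 + (r : ℂ) * Complex.exp ((2 * θ : ℝ) * Complex.I)‖ ^ 2
      = (1 - r) ^ 2 + 4 * r * cos θ ^ 2 := by
  rw [Complex.sq_norm, Complex.normSq_apply]
  simp only [Complex.add_re, Complex.add_im, Complex.one_re, Complex.one_im,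
    Complex.re_ofReal_mul, Complex.im_ofReal_mul, Complex.exp_ofReal_mul_I_re,
    Complex.exp_ofReal_mul_I_im, cos_two_mul, sin_two_mul]
  linear_combination (4 * r ^ 2 * cos θ ^ 2) * sin_sq_add_cos_sq θ

lemma norm_one_sub_mul_exp_sq (r θ : ℝ) :
    ‖1 - (r : ℂ) * Complex.exp ((2 * θ : ℝ) * Complex.I)‖ ^ 2
      = (1 - r) ^ 2 + 4 * r * sin θ ^ 2 := by
  rw [Complex.sq_norm, Complex.normSq_apply]
  simp only [Complex.sub_re, Complex.sub_im, Complex.one_re, Complex.one_im,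
    Complex.re_ofReal_mul, Complex.im_ofReal_mul, Complex.exp_ofReal_mul_I_re,
    Complex.exp_ofReal_mul_I_im, cos_two_mul, sin_two_mul]
  linear_combination (4 * r ^ 2 * cos θ ^ 2 - 4 * r) * sin_sq_add_cos_sq θ

/-- `Re (artanh (r e^{2iθ}))`, the Abel means of the Fourier series `∑ cos ((4k+2)θ) / (2k+1)`
of `-log (tan θ) / 2`; the arguments of the logarithms are `‖1 ± r e^{2iθ}‖²`. -/
noncomputable def logTanAbel (r θ : ℝ) : ℝ :=
  (log ((1 - r) ^ 2 + 4 * r * cos θ ^ 2) - log ((1 - r) ^ 2 + 4 * r * sin θ ^ 2)) / 4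

lemma hasSum_logTanAbel {r : ℝ} (h0 : 0 ≤ r) (h1 : r < 1) (θ : ℝ) :
    HasSum (fun k : ℕ => r ^ (2 * k + 1) * cos ((4 * k + 2) * θ) / (2 * k + 1))
      (logTanAbel r θ) := by
  set z : ℂ := r * Complex.exp ((2 * θ : ℝ) * Complex.I)
  have hz : ‖z‖ < 1 := by
    rwa [norm_mul, Complex.norm_exp_ofReal_mul_I, mul_one, Complex.norm_real, norm_of_nonneg h0]
  have h := Complex.hasSum_re ((Complex.hasSum_log_sub_log_of_norm_lt_one hz).div_const 2)
  have hlog : ∀ w : ℂ, (Complex.log w).re = log (‖w‖ ^ 2) / 2 := fun w => by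
    rw [Complex.log_re, log_pow]
    push_cast
    ring
  convert h using 1
  · ext k
    have hpow : z ^ (2 * k + 1)
        = (r ^ (2 * k + 1) : ℝ) * Complex.exp (((4 * k + 2) * θ : ℝ) * Complex.I) := by
      rw [mul_pow, ← Complex.exp_nat_mul]
      push_cast
      ring_nf
    rw [hpow, show (2 : ℂ) * (1 / (2 * k + 1)) * (((r ^ (2 * k + 1) : ℝ) : ℂ)
        * Complex.exp (((4 * k + 2) * θ : ℝ) * Complex.I)) / 2
        = ((r ^ (2 * k + 1) / (2 * k + 1) : ℝ) : ℂ)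
          * Complex.exp (((4 * k + 2) * θ : ℝ) * Complex.I)
        by push_cast; ring, Complex.re_ofReal_mul, Complex.exp_ofReal_mul_I_re]
    ring
  · rw [Complex.div_ofNat_re, Complex.sub_re, hlog, hlog, norm_one_add_mul_exp_sq,
      norm_one_sub_mul_exp_sq, logTanAbel]
    ring

lemma logTanAbel_one {θ : ℝ} (hs : 0 < sin θ) (hc : 0 < cos θ) :
    logTanAbel 1 θ = -log (tan θ) / 2 := by
  rw [logTanAbel, tan_eq_sin_div_cos, log_div hs.ne' hc.ne']
  simp only [sub_self, zero_pow two_ne_zero, zero_add, mul_one]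
  rw [log_mul (by norm_num) (by positivity), log_mul (by norm_num) (by positivity), log_pow,
    log_pow]
  push_cast
  ring

lemma continuousAt_logTanAbel_one {θ : ℝ} (hs : sin θ ≠ 0) (hc : cos θ ≠ 0) :
    ContinuousAt (fun r => logTanAbel r θ) 1 := by
  unfold logTanAbel
  have h1 : (1 - 1 : ℝ) ^ 2 + 4 * 1 * cos θ ^ 2 ≠ 0 := by positivity
  have h2 : (1 - 1 : ℝ) ^ 2 + 4 * 1 * sin θ ^ 2 ≠ 0 := by positivity
  fun_prop (disch := assumption)

lemma abs_logTanAbel_le {r θ : ℝ} (hr : r ∈ Icc (1 / 2) 1) (hθ : θ ∈ Ioc 0 (π / 4)) :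
    |logTanAbel r θ| ≤ 1 + |log (sin θ)| := by
  obtain ⟨hr1, hr2⟩ := hr
  have hs : 0 < sin θ := sin_pos_of_pos_of_lt_pi hθ.1 (by linarith [hθ.2, pi_pos])
  have hc : 1 / 2 ≤ cos θ ^ 2 := by
    have : 0 ≤ cos (2 * θ) := cos_nonneg_of_mem_Icc ⟨by linarith [hθ.1, pi_pos], by linarith [hθ.2]⟩
    rw [cos_sq θ]
    linarith
  have hsc := sin_sq_add_cos_sq θ
  have hC1 : 1 ≤ (1 - r) ^ 2 + 4 * r * cos θ ^ 2 := by nlinarith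
  have hC4 : (1 - r) ^ 2 + 4 * r * cos θ ^ 2 ≤ 4 := by nlinarith
  have hS1 : 2 * sin θ ^ 2 ≤ (1 - r) ^ 2 + 4 * r * sin θ ^ 2 := by nlinarith
  have hS4 : (1 - r) ^ 2 + 4 * r * sin θ ^ 2 ≤ 4 := by nlinarith
  have hlogC := log_nonneg hC1
  have hlogC' := log_le_log (by positivity) hC4
  have hlogS := log_le_log (by positivity) hS1
  have hlogS' := log_le_log (by positivity) hS4
  rw [log_mul (by norm_num) (by positivity), log_pow] at hlogS
  have hlog4 : log 4 < 2 := by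
    rw [show (4 : ℝ) = 2 ^ 2 by norm_num, log_pow]
    push_cast
    linarith [log_two_lt_d9]
  have hlog2 := log_pos one_lt_two
  have hlogs : log (sin θ) ≤ 0 := log_nonpos hs.le (sin_le_one θ)
  rw [logTanAbel, abs_le, abs_of_nonpos hlogs]
  push_cast at hlogS
  constructor <;> linarith

lemma hasSum_integral_mul_logTanAbel {w : ℝ → ℝ} {a b : ℝ} (hw : IntervalIntegrable w volume a b)
    {r : ℝ} (h0 : 0 ≤ r) (h1 : r < 1) :
    HasSum
      (fun k : ℕ => r ^ (2 * k + 1) * ((∫ θ in a..b, w θ * cos ((4 * k + 2) * θ)) / (2 * k + 1)))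
      (∫ θ in a..b, w θ * logTanAbel r θ) := by
  have hgeom : Summable (fun k : ℕ => r ^ (2 * k + 1)) :=
    ((summable_geometric_of_lt_one (sq_nonneg r) (by nlinarith)).mul_left r).congr
      fun k => by ring
  have hbound : ∀ (k : ℕ) (θ : ℝ),
      ‖w θ * (r ^ (2 * k + 1) * cos ((4 * k + 2) * θ) / (2 * k + 1))‖
        ≤ ‖w θ‖ * r ^ (2 * k + 1) := by
    intro k θ
    have hk : (1 : ℝ) ≤ 2 * k + 1 := by linarith [(k.cast_nonneg : (0:ℝ) ≤ k)]
    rw [norm_mul]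
    refine mul_le_mul_of_nonneg_left ?_ (norm_nonneg _)
    rw [norm_div, norm_mul, norm_pow, Real.norm_of_nonneg h0,
      Real.norm_of_nonneg (by linarith : (0:ℝ) ≤ 2 * k + 1)]
    calc r ^ (2 * k + 1) * ‖cos ((4 * k + 2) * θ)‖ / (2 * k + 1)
        ≤ r ^ (2 * k + 1) * 1 / 1 := by
          gcongr
          exact abs_cos_le_one _
      _ = r ^ (2 * k + 1) := by ring
  have h := hasSum_integral_of_dominated_convergence (fun k θ => ‖w θ‖ * r ^ (2 * k + 1))
    (fun k => (intervalIntegrable_iff.mp hw).aestronglyMeasurable.mul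
      (by fun_prop : Continuous _).aestronglyMeasurable)
    (fun k => ae_of_all _ fun θ _ => hbound k θ)
    (ae_of_all _ fun θ _ => hgeom.mul_left _)
    (by simpa only [tsum_mul_left] using hw.norm.mul_const _)
    (ae_of_all _ fun θ _ => (hasSum_logTanAbel h0 h1 θ).mul_left (w θ))
  refine h.congr_fun fun k => ?_
  rw [← intervalIntegral.integral_div, ← intervalIntegral.integral_const_mul]
  congr 1 with θ
  simp only [Pi.mul_apply]
  ring

lemma tendsto_integral_mul_logTanAbel {w : ℝ → ℝ} (hw : Continuous w) :
    Tendsto (fun r => ∫ θ in (0:ℝ)..π / 4, w θ * logTanAbel r θ) (𝓝[<] 1)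
      (𝓝 (∫ θ in (0:ℝ)..π / 4, w θ * (-log (tan θ) / 2))) := by
  have hpi : 0 < π / 4 := by positivity
  refine tendsto_integral_filter_of_dominated_convergence (fun θ => |w θ| * (1 + |log (sin θ)|))
    (Eventually.of_forall fun r => hw.aestronglyMeasurable.mul
      (by unfold logTanAbel; fun_prop : Measurable (logTanAbel r)).aestronglyMeasurable) ?_
    ((intervalIntegrable_const.add intervalIntegrable_log_sin.abs).continuousOn_mul
      hw.abs.continuousOn) ?_
  · filter_upwards [Ioo_mem_nhdsLT (show (1 / 2 : ℝ) < 1 by norm_num)] with r hr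
    refine ae_of_all _ fun θ hθ => ?_
    rw [uIoc_of_le hpi.le] at hθ
    rw [norm_mul, Real.norm_eq_abs, Real.norm_eq_abs]
    exact mul_le_mul_of_nonneg_left (abs_logTanAbel_le (Ioo_subset_Icc_self hr) hθ) (abs_nonneg _)
  · refine ae_of_all _ fun θ hθ => ?_
    rw [uIoc_of_le hpi.le] at hθ
    have hs : 0 < sin θ := sin_pos_of_pos_of_lt_pi hθ.1 (by linarith [hθ.2, pi_pos])
    have hc : 0 < cos θ :=
      cos_pos_of_mem_Ioo ⟨by linarith [hθ.1, pi_pos], by linarith [hθ.2, pi_pos]⟩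
    rw [← logTanAbel_one hs hc]
    exact ((continuousAt_logTanAbel_one hs.ne' hc.ne').tendsto.const_mul (w θ)).mono_left
      nhdsWithin_le_nhds

lemma tendsto_tsum_pow_two_mul_add_one_mul {a : ℕ → ℝ} (ha : Summable a) :
    Tendsto (fun r : ℝ => ∑' k : ℕ, r ^ (2 * k + 1) * a k) (𝓝[<] 1) (𝓝 (∑' k : ℕ, a k)) := by
  refine tendsto_tsum_of_dominated_convergence (summable_abs_iff.mpr ha) (fun k => ?_) ?_
  · exact ((by fun_prop : Continuous fun r : ℝ => r ^ (2 * k + 1) * a k).tendsto' 1 _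
      (by simp)).mono_left nhdsWithin_le_nhds
  · filter_upwards [Ioo_mem_nhdsLT zero_lt_one] with r hr k
    rw [norm_mul, norm_pow, Real.norm_of_nonneg hr.1.le, Real.norm_eq_abs]
    exact mul_le_of_le_one_left (abs_nonneg _) (pow_le_one₀ hr.1.le hr.2.le)

theorem integral_mul_neg_log_tan_div_two {w : ℝ → ℝ} (hw : Continuous w)
    (hs : Summable fun k : ℕ => (∫ θ in (0:ℝ)..π / 4, w θ * cos ((4 * k + 2) * θ)) / (2 * k + 1)) :
    ∫ θ in (0:ℝ)..π / 4, w θ * (-log (tan θ) / 2)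
      = ∑' k : ℕ, (∫ θ in (0:ℝ)..π / 4, w θ * cos ((4 * k + 2) * θ)) / (2 * k + 1) := by
  refine tendsto_nhds_unique ((tendsto_integral_mul_logTanAbel hw).congr' ?_)
    (tendsto_tsum_pow_two_mul_add_one_mul hs)
  filter_upwards [Ioo_mem_nhdsLT zero_lt_one] with r hr
  exact (hasSum_integral_mul_logTanAbel (hw.intervalIntegrable _ _) hr.1.le hr.2).tsum_eq.symm

lemma summable_one_div_nat_add_one_pow {p : ℕ} (hp : 1 < p) :
    Summable fun n : ℕ => 1 / ((n : ℝ) + 1) ^ p := by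
  simpa using (summable_nat_add_iff 1).mpr (summable_one_div_nat_pow.mpr hp)

lemma summable_one_div_two_mul_add_one_pow {p : ℕ} (hp : 1 < p) :
    Summable fun n : ℕ => 1 / (2 * (n : ℝ) + 1) ^ p := by
  refine (summable_one_div_nat_add_one_pow hp).of_nonneg_of_le (fun n => by positivity) fun n => ?_
  gcongr
  linarith [(n.cast_nonneg : (0:ℝ) ≤ n)]

lemma tsum_one_div_two_mul_add_one_cube :
    ∑' n : ℕ, 1 / (2 * (n : ℝ) + 1) ^ 3 = 7 / 8 * ∑' n : ℕ, 1 / ((n : ℝ) + 1) ^ 3 := by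
  have hsum := summable_one_div_nat_add_one_pow (show 1 < 3 by norm_num)
  have heven : ∀ k : ℕ, 1 / (((2 * k : ℕ) : ℝ) + 1) ^ 3 = 1 / (2 * (k : ℝ) + 1) ^ 3 :=
    fun k => by push_cast; ring
  have hodd : ∀ k : ℕ, 1 / (((2 * k + 1 : ℕ) : ℝ) + 1) ^ 3 = 1 / 8 * (1 / ((k : ℝ) + 1) ^ 3) :=
    fun k => by push_cast; field_simp; ring
  have h := tsum_even_add_odd (f := fun n : ℕ => 1 / ((n : ℝ) + 1) ^ 3)
    (by simpa only [heven] using summable_one_div_two_mul_add_one_pow (show 1 < 3 by norm_num))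
    (by simpa only [hodd] using hsum.mul_left (1 / 8))
  simp only [heven, hodd, tsum_mul_left] at h
  linarith

lemma sin_four_mul_add_two_mul_pi_div_four (k : ℕ) : sin ((4 * k + 2) * (π / 4)) = (-1) ^ k := by
  rw [show (4 * k + 2) * (π / 4) = k * π + π / 2 by ring, sin_add_pi_div_two, cos_nat_mul_pi]

lemma cos_four_mul_add_two_mul_pi_div_four (k : ℕ) : cos ((4 * k + 2) * (π / 4)) = 0 := by
  rw [show (4 * k + 2) * (π / 4) = k * π + π / 2 by ring, cos_add_pi_div_two, sin_nat_mul_pi,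
    neg_zero]

lemma integral_cos_mul {m : ℝ} (hm : m ≠ 0) (b : ℝ) :
    ∫ θ in (0:ℝ)..b, cos (m * θ) = sin (m * b) / m := by
  rw [integral_comp_mul_left (fun θ => cos θ) hm, integral_cos, mul_zero, sin_zero, sub_zero,
    smul_eq_mul, inv_mul_eq_div]

lemma integral_mul_cos_mul {m : ℝ} (hm : m ≠ 0) (b : ℝ) :
    ∫ θ in (0:ℝ)..b, θ * cos (m * θ) = b * sin (m * b) / m + (cos (m * b) - 1) / m ^ 2 := by
  have hderiv : ∀ θ ∈ uIcc 0 b, HasDerivAt (fun t => t * sin (m * t) / m + cos (m * t) / m ^ 2)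
      (θ * cos (m * θ)) θ := by
    intro θ _
    have hlin : HasDerivAt (fun t => m * t) m θ := by simpa using (hasDerivAt_id θ).const_mul m
    refine ((((hasDerivAt_id θ).mul ((hasDerivAt_sin _).comp θ hlin)).div_const m).add
      (((hasDerivAt_cos _).comp θ hlin).div_const (m ^ 2))).congr_deriv ?_
    simp only [Function.comp_apply, id]
    field_simp
    ring
  rw [integral_eq_sub_of_hasDerivAt hderiv (by apply Continuous.intervalIntegrable; fun_prop)]
  simp only [mul_zero, sin_zero, zero_div, cos_zero, zero_add]
  ring

noncomputable def catalanConstant : ℝ := ∑' n : ℕ, (-1 : ℝ) ^ n / (2 * n + 1) ^ 2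

lemma summable_catalanConstant : Summable fun n : ℕ => (-1 : ℝ) ^ n / (2 * n + 1) ^ 2 :=
  (summable_one_div_two_mul_add_one_pow one_lt_two).of_norm_bounded fun n => by
    rw [norm_div, norm_pow, norm_neg, norm_one, one_pow, Real.norm_of_nonneg (by positivity)]

lemma integral_neg_log_tan_div_two :
    ∫ θ in (0:ℝ)..π / 4, -log (tan θ) / 2 = catalanConstant / 2 := by
  have hc : ∀ k : ℕ, ∫ θ in (0:ℝ)..π / 4, cos ((4 * k + 2) * θ)
      = (-1) ^ k / (2 * (2 * k + 1)) := fun k => by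
    rw [integral_cos_mul (by positivity), sin_four_mul_add_two_mul_pi_div_four]
    ring
  have h := integral_mul_neg_log_tan_div_two (w := fun _ => 1) continuous_const (by
    simp only [one_mul, hc]
    refine (summable_catalanConstant.div_const 2).congr fun k => ?_
    field_simp)
  simp only [one_mul, hc] at h
  rw [h, catalanConstant, ← tsum_div_const]
  congr 1 with k
  field_simp

lemma integral_id_mul_neg_log_tan_div_two :
    ∫ θ in (0:ℝ)..π / 4, θ * (-log (tan θ) / 2)
      = π / 8 * catalanConstant - 1 / 4 * ∑' n : ℕ, 1 / (2 * (n : ℝ) + 1) ^ 3 := by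
  have hterm : ∀ k : ℕ, (∫ θ in (0:ℝ)..π / 4, θ * cos ((4 * k + 2) * θ)) / (2 * k + 1)
      = π / 8 * ((-1) ^ k / (2 * k + 1) ^ 2) - 1 / 4 * (1 / (2 * k + 1) ^ 3) := fun k => by
    rw [integral_mul_cos_mul (by positivity), sin_four_mul_add_two_mul_pi_div_four,
      cos_four_mul_add_two_mul_pi_div_four]
    field_simp
    ring
  have hG := summable_catalanConstant.mul_left (π / 8)
  have hZ := (summable_one_div_two_mul_add_one_pow (by norm_num : 1 < 3)).mul_left (1 / 4)
  have h := integral_mul_neg_log_tan_div_two (w := fun θ => θ) continuous_id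
    (by simpa only [hterm] using hG.sub hZ)
  rw [h, tsum_congr hterm, hG.tsum_sub hZ, tsum_mul_left, tsum_mul_left, catalanConstant]

lemma integral_artanh_div_one_add_sq :
    ∫ x in (0:ℝ)..1, artanh x / (1 + x ^ 2) = catalanConstant / 2 := by
  simpa only [mul_one, one_mul, integral_neg_log_tan_div_two] using
    integral_artanh_div_one_add_sq_mul_comp_arctan fun _ => 1

lemma integral_artanh_div_one_add_sq_mul_arctan :
    ∫ x in (0:ℝ)..1, artanh x / (1 + x ^ 2) * arctan x
      = 1 / 4 * ∑' n : ℕ, 1 / (2 * (n : ℝ) + 1) ^ 3 := by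
  have hf : IntervalIntegrable (fun ψ => -log (tan ψ) / 2) volume 0 (π / 4) :=
    (intervalIntegrable_log_tan _ _).neg.div_const 2
  calc ∫ x in (0:ℝ)..1, artanh x / (1 + x ^ 2) * arctan x
      = ∫ ψ in (0:ℝ)..π / 4, (π / 4 - ψ) * (-log (tan ψ) / 2) :=
        integral_artanh_div_one_add_sq_mul_comp_arctan id
    _ = π / 4 * (∫ ψ in (0:ℝ)..π / 4, -log (tan ψ) / 2)
          - ∫ ψ in (0:ℝ)..π / 4, ψ * (-log (tan ψ) / 2) := by
        simp_rw [sub_mul]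
        rw [integral_sub (hf.const_mul _) (hf.continuousOn_mul continuous_id'.continuousOn),
          intervalIntegral.integral_const_mul]
    _ = _ := by
        rw [integral_neg_log_tan_div_two, integral_id_mul_neg_log_tan_div_two]
        ring

lemma integral_primitive_div_one_add_sq {f : ℝ → ℝ} (hf : IntervalIntegrable f volume 0 1)
    (hfc : ContinuousOn f (Ioo 0 1)) :
    ∫ t in (0:ℝ)..1, (∫ s in (0:ℝ)..t, f s) / (1 + t ^ 2)
      = π / 4 * (∫ s in (0:ℝ)..1, f s) - ∫ t in (0:ℝ)..1, f t * arctan t := by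
  have hu : ContinuousOn (fun t => ∫ s in (0:ℝ)..t, f s) (uIcc 0 1) :=
    continuousOn_primitive_interval' hf left_mem_uIcc
  have huu' : ∀ t ∈ Ioo (min 0 1) (max 0 1),
      HasDerivWithinAt (fun t => ∫ s in (0:ℝ)..t, f s) (f t) (Ioi t) t := by
    intro t ht
    rw [min_eq_left zero_le_one, max_eq_right zero_le_one] at ht
    refine (integral_hasDerivAt_right (hf.mono_set ?_)
      (hfc.stronglyMeasurableAtFilter isOpen_Ioo t ht)
      (hfc.continuousAt (isOpen_Ioo.mem_nhds ht))).hasDerivWithinAt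
    rw [uIcc_of_le ht.1.le, uIcc_of_le zero_le_one]
    exact Icc_subset_Icc_right ht.2.le
  have h := integral_mul_deriv_eq_deriv_mul_of_hasDeriv_right hu continuous_arctan.continuousOn
    huu' (fun t _ => (hasDerivAt_arctan t).hasDerivWithinAt) hf
    ((continuous_const.div (by fun_prop) fun t => by positivity :
      Continuous fun t : ℝ => 1 / (1 + t ^ 2)).intervalIntegrable 0 1)
  simp only [integral_same, arctan_one, arctan_zero, mul_zero, sub_zero, mul_one_div] at h
  rw [h, mul_comm]

lemma triple_integral_eq_integral_primitive :
    (∫ t3 in (0:ℝ)..1, ∫ t2 in (0:ℝ)..t3, ∫ t1 in (0:ℝ)..t2,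
        1 / ((1 - t1 ^ 2) * (1 + t2 ^ 2) * (1 + t3 ^ 2)))
      = ∫ t3 in (0:ℝ)..1, (∫ t2 in (0:ℝ)..t3, artanh t2 / (1 + t2 ^ 2)) / (1 + t3 ^ 2) := by
  refine integral_congr_Ioo_of_le zero_le_one fun t3 ht3 => ?_
  have hinner : ∀ t2 ∈ uIcc 0 t3,
      ∫ t1 in (0:ℝ)..t2, 1 / ((1 - t1 ^ 2) * (1 + t2 ^ 2) * (1 + t3 ^ 2))
        = artanh t2 / (1 + t2 ^ 2) / (1 + t3 ^ 2) := by
    intro t2 ht2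
    rw [uIcc_of_le ht3.1.le] at ht2
    simp_rw [← div_div]
    rw [intervalIntegral.integral_div, intervalIntegral.integral_div,
      integral_one_div_one_sub_sq ⟨by linarith [ht2.1], ht2.2.trans_lt ht3.2⟩]
  rw [integral_congr hinner, intervalIntegral.integral_div]

theorem stmt10 :
    π * (∑' n : ℕ, (-1:ℝ)^n / (2*n+1)^2)
    = 8 * (∫ t3 in (0:ℝ)..1, ∫ t2 in (0:ℝ)..t3, ∫ t1 in (0:ℝ)..t2,
        1 / ((1 - t1^2) * (1 + t2^2) * (1 + t3^2)))
      + (7/4) * (∑' n : ℕ, (1:ℝ)/(n+1)^3) := by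
  have hcont : ContinuousOn (fun x => artanh x / (1 + x ^ 2)) (Ioo 0 1) :=
    (continuousOn_artanh.mono fun x hx => ⟨by linarith [hx.1], hx.2⟩).div
      (by fun_prop) fun x _ => by positivity
  rw [triple_integral_eq_integral_primitive,
    integral_primitive_div_one_add_sq intervalIntegrable_artanh_div_one_add_sq hcont,
    integral_artanh_div_one_add_sq, integral_artanh_div_one_add_sq_mul_arctan,
    tsum_one_div_two_mul_add_one_cube, catalanConstant]
  ring
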